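/- arXiv:1806.02490 — 5 statements merged into one kernel-verified Lean document; each statement's English description precedes it below -/
import Mathlib

section
/- Suppose utility functions u_i : {0,..,A_i} → ℝ for i = 1,..,m are each discretely concave, where A_i ≥ 0 are integers. Then the optimal value function U(z) = max { Σ_{i=1}^m u_i(y_i) : 0 ≤ y_i ≤ A_i integers, Σ_i y_i ≤ z } is discretely concave in z on {0, 1, 2, ...}. -/
/-- Decreasing increments: discrete concavity implies increments decrease. -/
lemma dec_incr (f : ℕ → ℝ) (A : ℕ)
    (h : ∀ y : ℕ, 1 ≤ y → y + 1 ≤ A → f y - f (y - 1) ≥ f (y + 1) - f y) :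
    ∀ p q : ℕ, p < q → q ≤ A → f q - f (q - 1) ≤ f (p + 1) - f p := by
  intro p q
  induction q with
  | zero => omega
  | succ n ih =>
    intro hpq hqA
    rcases eq_or_lt_of_le (Nat.lt_succ_iff.mp hpq) with h1 | h1
    · subst h1; simp
    · have h2 : f n - f (n - 1) ≥ f (n + 1) - f n := h n (by omega) hqA
      have h3 : f n - f (n - 1) ≤ f (p + 1) - f p := ih h1 (by omega)
      have : (n + 1) - 1 = n := by omega
      rw [this]
      linarith

theorem stmt_7 (m : ℕ) (A : Fin m → ℕ) (u : Fin m → ℕ → ℝ)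
    (hconc : ∀ i : Fin m, ∀ y : ℕ, 1 ≤ y → y + 1 ≤ A i →
      u i y - u i (y - 1) ≥ u i (y + 1) - u i y)
    (U : ℕ → ℝ)
    (hU : ∀ z : ℕ, IsGreatest
      {t : ℝ | ∃ y : Fin m → ℕ, (∀ i, y i ≤ A i) ∧ (∑ i, y i) ≤ z ∧ t = ∑ i, u i (y i)}
      (U z)) :
    ∀ z : ℕ, 1 ≤ z → U z - U (z - 1) ≥ U (z + 1) - U z := by
  intro z hz
  obtain ⟨ym, hymA, hymS, hymV⟩ := (hU (z - 1)).1
  obtain ⟨yp, hypA, hypS, hypV⟩ := (hU (z + 1)).1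
  have hub := (hU z).2
  -- U (z-1) ≤ U z
  have hLo : U (z - 1) ≤ U z := hub ⟨ym, hymA, by omega, hymV⟩
  by_cases hc : (∑ i, yp i) ≤ z
  · -- z+1 optimum feasible at z
    have hHi : U (z + 1) ≤ U z := hub ⟨yp, hypA, hc, hypV⟩
    linarith
  · push_neg at hc
    have hsum : (∑ i, yp i) = z + 1 := by omega
    -- find i with ym i < yp i
    have hex : ∃ i, ym i < yp i := by
      by_contra hno
      push_neg at hno
      have : (∑ i, yp i) ≤ ∑ i, ym i := Finset.sum_le_sum fun i _ => hno i
      omega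
    obtain ⟨i, hi⟩ := hex
    set a : Fin m → ℕ := fun j => if j = i then yp i - 1 else yp j with ha
    set b : Fin m → ℕ := fun j => if j = i then ym i + 1 else ym j with hb
    have hmem := Finset.mem_univ i
    -- sum splittings
    have hea : ∀ (f : Fin m → ℕ → ℝ) (v : Fin m → ℕ),
        (∑ j, f j (v j)) = (∑ j ∈ Finset.univ.erase i, f j (v j)) + f i (v i) :=
      fun f v => (Finset.sum_erase_add _ _ hmem).symm
    have heaN : ∀ (v : Fin m → ℕ),
        (∑ j, v j) = (∑ j ∈ Finset.univ.erase i, v j) + v i :=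
      fun v => (Finset.sum_erase_add _ _ hmem).symm
    have haeq : (∑ j ∈ Finset.univ.erase i, a j) = ∑ j ∈ Finset.univ.erase i, yp j :=
      Finset.sum_congr rfl (fun j hj => by simp [ha, Finset.ne_of_mem_erase hj])
    have hbeq : (∑ j ∈ Finset.univ.erase i, b j) = ∑ j ∈ Finset.univ.erase i, ym j :=
      Finset.sum_congr rfl (fun j hj => by simp [hb, Finset.ne_of_mem_erase hj])
    have haeqU : (∑ j ∈ Finset.univ.erase i, u j (a j)) = ∑ j ∈ Finset.univ.erase i, u j (yp j) :=
      Finset.sum_congr rfl (fun j hj => by rw [show a j = yp j from by simp [ha, Finset.ne_of_mem_erase hj]])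
    have hbeqU : (∑ j ∈ Finset.univ.erase i, u j (b j)) = ∑ j ∈ Finset.univ.erase i, u j (ym j) :=
      Finset.sum_congr rfl (fun j hj => by rw [show b j = ym j from by simp [hb, Finset.ne_of_mem_erase hj]])
    have hai : a i = yp i - 1 := by simp [ha]
    have hbi : b i = ym i + 1 := by simp [hb]
    -- feasibility of a
    have haA : ∀ j, a j ≤ A j := by
      intro j
      by_cases hji : j = i
      · subst hji; simp only [ha, if_pos rfl]
        exact le_trans (Nat.sub_le _ _) (hypA j)
      · simp only [ha, if_neg hji]; exact hypA j
    have haS : (∑ j, a j) ≤ z := by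
      have e1 := heaN a
      have e2 := heaN yp
      rw [haeq, hai] at e1
      omega
    -- feasibility of b
    have hbA : ∀ j, b j ≤ A j := by
      intro j
      by_cases hji : j = i
      · subst hji; simp only [hb, if_pos rfl]
        have := hypA j; omega
      · simp only [hb, if_neg hji]; exact hymA j
    have hbS : (∑ j, b j) ≤ z := by
      have e1 := heaN b
      have e2 := heaN ym
      rw [hbeq, hbi] at e1
      omega
    have hUa : (∑ j, u j (a j)) ≤ U z := hub ⟨a, haA, haS, rfl⟩
    have hUb : (∑ j, u j (b j)) ≤ U z := hub ⟨b, hbA, hbS, rfl⟩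
    -- value identities
    have va : (∑ j, u j (a j)) =
        (∑ j, u j (yp j)) - u i (yp i) + u i (yp i - 1) := by
      have e1 := hea u a
      have e2 := hea u yp
      rw [haeqU, hai] at e1
      linarith
    have vb : (∑ j, u j (b j)) =
        (∑ j, u j (ym j)) - u i (ym i) + u i (ym i + 1) := by
      have e1 := hea u b
      have e2 := hea u ym
      rw [hbeqU, hbi] at e1
      linarith
    -- exchange inequality
    have hex2 : u i (yp i) - u i (yp i - 1) ≤ u i (ym i + 1) - u i (ym i) :=
      dec_incr (u i) (A i) (hconc i) (ym i) (yp i) hi (hypA i)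
    linarith
end

section
/- Let U(z) = max { Σ_{i=1}^m u_i(y_i) : 0 ≤ y_i ≤ A_i integers, Σ_i y_i ≤ z } where each u_i is discretely concave with unit increments u_i(y) - u_i(y-1) > c for all 1 ≤ y ≤ A_i. Define Ũ(z) = U(z) - c·min(z, Σ_i A_i). Then Ũ is discretely concave and nondecreasing in z ≥ 0. -/
theorem stmt_8 (m : ℕ) (A : Fin m → ℕ) (u : Fin m → ℕ → ℝ) (c : ℝ) (hc : 0 < c)
    (hconc : ∀ i : Fin m, ∀ y : ℕ, 1 ≤ y → y + 1 ≤ A i →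
      u i y - u i (y - 1) ≥ u i (y + 1) - u i y)
    (hinc : ∀ i : Fin m, ∀ y : ℕ, 1 ≤ y → y ≤ A i → u i y - u i (y - 1) > c)
    (U : ℕ → ℝ)
    (hU : ∀ z : ℕ, IsGreatest
      {t : ℝ | ∃ y : Fin m → ℕ, (∀ i, y i ≤ A i) ∧ (∑ i, y i) ≤ z ∧ t = ∑ i, u i (y i)}
      (U z))
    (Ut : ℕ → ℝ)
    (hUt : ∀ z : ℕ, Ut z = U z - c * (min z (∑ i, A i) : ℕ)) :
    (∀ z : ℕ, 1 ≤ z → Ut z - Ut (z - 1) ≥ Ut (z + 1) - Ut z) ∧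
    (∀ z z' : ℕ, z ≤ z' → Ut z ≤ Ut z') := by
  set S := ∑ i, A i with hS
  -- differences of u are nonincreasing
  have delta : ∀ i : Fin m, ∀ a b : ℕ, 1 ≤ a → a ≤ b → b ≤ A i →
      u i a - u i (a - 1) ≥ u i b - u i (b - 1) := by
    intro i a b ha hab hb
    induction b with
    | zero => omega
    | succ n ih =>
      rcases eq_or_lt_of_le hab with h | h
      · rw [h]
      · have hn : a ≤ n := by omega
        have h1 : 1 ≤ n := le_trans ha hn
        have h2 := hconc i n h1 (by omega)
        have h3 := ih hn (by omega)
        have hcast : n + 1 - 1 = n := by omega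
        rw [hcast]
        linarith
  -- upper bound and witness versions of hU
  have hUub : ∀ (z : ℕ) (y : Fin m → ℕ), (∀ i, y i ≤ A i) → (∑ i, y i) ≤ z →
      ∑ i, u i (y i) ≤ U z := fun z y h1 h2 => (hU z).2 ⟨y, h1, h2, rfl⟩
  have hUex : ∀ z : ℕ, ∃ y : Fin m → ℕ,
      (∀ i, y i ≤ A i) ∧ (∑ i, y i) ≤ z ∧ U z = ∑ i, u i (y i) := fun z => (hU z).1
  -- monotonicity of U
  have hUmono : ∀ z z' : ℕ, z ≤ z' → U z ≤ U z' := by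
    intro z z' hzz
    obtain ⟨y, hy1, hy2, hy3⟩ := hUex z
    rw [hy3]
    exact hUub z' y hy1 (le_trans hy2 hzz)
  -- U z ≤ U S always
  have hUS : ∀ z : ℕ, U z ≤ U S := by
    intro z
    obtain ⟨y, hy1, hy2, hy3⟩ := hUex z
    rw [hy3]
    exact hUub S y hy1 (Finset.sum_le_sum (fun i _ => hy1 i))
  -- increment step: for z < S, U z + c < U (z+1)
  have hUstep : ∀ z : ℕ, z < S → U z + c < U (z + 1) := by
    intro z hz
    obtain ⟨y, hy1, hy2, hy3⟩ := hUex z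
    have hex : ∃ i, y i < A i := by
      by_contra h
      push_neg at h
      have : S ≤ ∑ i, y i := Finset.sum_le_sum (fun i _ => h i)
      omega
    obtain ⟨i, hi⟩ := hex
    set y' := Function.update y i (y i + 1) with hy'
    have hsum : ∑ j, y' j = (y i + 1) + ∑ j ∈ Finset.univ \ {i}, y j :=
      Finset.sum_update_of_mem (Finset.mem_univ i) _ _
    have hsumy : ∑ j, y j = ∑ j ∈ Finset.univ \ {i}, y j + y i :=
      Finset.sum_eq_sum_sdiff_singleton_add (Finset.mem_univ i) _
    have hval : ∑ j, u j (y' j) = u i (y i + 1) + ∑ j ∈ Finset.univ \ {i}, u j (y j) := by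
      have : ∀ j, u j (y' j) = Function.update (fun k => u k (y k)) i (u i (y i + 1)) j :=
        fun j => Function.apply_update (fun k x => u k x) y i (y i + 1) j
      rw [Finset.sum_congr rfl (fun j _ => this j)]
      exact Finset.sum_update_of_mem (Finset.mem_univ i) _ _
    have hvaly : ∑ j, u j (y j) = ∑ j ∈ Finset.univ \ {i}, u j (y j) + u i (y i) :=
      Finset.sum_eq_sum_sdiff_singleton_add (Finset.mem_univ i) _
    have h1 : ∀ j, y' j ≤ A j := by
      intro j
      by_cases hj : j = i
      · subst hj; simp [hy', Function.update_self]; omega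
      · simp [hy', Function.update_of_ne hj]; exact hy1 j
    have h2 : ∑ j, y' j ≤ z + 1 := by omega
    have h3 := hUub (z + 1) y' h1 h2
    have h4 := hinc i (y i + 1) (by omega) (by omega)
    have hcast : y i + 1 - 1 = y i := by omega
    rw [hcast] at h4
    rw [hval] at h3
    rw [hy3, hvaly]
    linarith
  -- concavity of U
  have hUconc : ∀ n : ℕ, U (n + 2) + U n ≤ U (n + 1) + U (n + 1) := by
    intro n
    obtain ⟨p, hp1, hp2, hp3⟩ := hUex (n + 2)
    by_cases hcase : ∑ i, p i ≤ n + 1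
    · have h1 : U (n + 2) ≤ U (n + 1) := by
        rw [hp3]; exact hUub (n + 1) p hp1 hcase
      have h2 : U n ≤ U (n + 1) := hUmono n (n + 1) (by omega)
      linarith
    · have hpsum : ∑ i, p i = n + 2 := by omega
      obtain ⟨q, hq1, hq2, hq3⟩ := hUex n
      have hex : ∃ i, q i < p i := by
        by_contra h
        push_neg at h
        have : ∑ i, p i ≤ ∑ i, q i := Finset.sum_le_sum (fun i _ => h i)
        omega
      obtain ⟨i, hi⟩ := hex
      have hpi1 : 1 ≤ p i := by omega
      have hA : q i + 1 ≤ A i := le_trans hi (hp1 _)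
      -- y1 = q with one more unit at i
      set y1 := Function.update q i (q i + 1) with hy1d
      have hsum1 : ∑ j, y1 j = (q i + 1) + ∑ j ∈ Finset.univ \ {i}, q j :=
        Finset.sum_update_of_mem (Finset.mem_univ i) _ _
      have hsumq : ∑ j, q j = ∑ j ∈ Finset.univ \ {i}, q j + q i :=
        Finset.sum_eq_sum_sdiff_singleton_add (Finset.mem_univ i) _
      have hval1 : ∑ j, u j (y1 j) = u i (q i + 1) + ∑ j ∈ Finset.univ \ {i}, u j (q j) := by
        have : ∀ j, u j (y1 j) = Function.update (fun k => u k (q k)) i (u i (q i + 1)) j :=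
          fun j => Function.apply_update (fun k x => u k x) q i (q i + 1) j
        rw [Finset.sum_congr rfl (fun j _ => this j)]
        exact Finset.sum_update_of_mem (Finset.mem_univ i) _ _
      have hvalq : ∑ j, u j (q j) = ∑ j ∈ Finset.univ \ {i}, u j (q j) + u i (q i) :=
        Finset.sum_eq_sum_sdiff_singleton_add (Finset.mem_univ i) _
      have hfeas1a : ∀ j, y1 j ≤ A j := by
        intro j
        by_cases hj : j = i
        · subst hj; simp [hy1d, Function.update_self]; omega
        · simp [hy1d, Function.update_of_ne hj]; exact hq1 j
      have hfeas1b : ∑ j, y1 j ≤ n + 1 := by omega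
      have hU1 := hUub (n + 1) y1 hfeas1a hfeas1b
      -- y2 = p with one fewer unit at i
      set y2 := Function.update p i (p i - 1) with hy2d
      have hsum2 : ∑ j, y2 j = (p i - 1) + ∑ j ∈ Finset.univ \ {i}, p j :=
        Finset.sum_update_of_mem (Finset.mem_univ i) _ _
      have hsump : ∑ j, p j = ∑ j ∈ Finset.univ \ {i}, p j + p i :=
        Finset.sum_eq_sum_sdiff_singleton_add (Finset.mem_univ i) _
      have hval2 : ∑ j, u j (y2 j) = u i (p i - 1) + ∑ j ∈ Finset.univ \ {i}, u j (p j) := by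
        have : ∀ j, u j (y2 j) = Function.update (fun k => u k (p k)) i (u i (p i - 1)) j :=
          fun j => Function.apply_update (fun k x => u k x) p i (p i - 1) j
        rw [Finset.sum_congr rfl (fun j _ => this j)]
        exact Finset.sum_update_of_mem (Finset.mem_univ i) _ _
      have hvalp : ∑ j, u j (p j) = ∑ j ∈ Finset.univ \ {i}, u j (p j) + u i (p i) :=
        Finset.sum_eq_sum_sdiff_singleton_add (Finset.mem_univ i) _
      have hfeas2a : ∀ j, y2 j ≤ A j := by
        intro j
        by_cases hj : j = i
        · subst hj; simp [hy2d, Function.update_self]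
          have := hp1 j; omega
        · simp [hy2d, Function.update_of_ne hj]; exact hp1 j
      have hfeas2b : ∑ j, y2 j ≤ n + 1 := by omega
      have hU2 := hUub (n + 1) y2 hfeas2a hfeas2b
      -- exchange inequality
      have hdel := delta i (q i + 1) (p i) (by omega) hi (hp1 _)
      have hcast : q i + 1 - 1 = q i := by omega
      rw [hcast] at hdel
      rw [hval1] at hU1
      rw [hval2] at hU2
      rw [hp3, hvalp, hq3, hvalq]
      linarith
  -- rewrite Ut with explicit min values
  have hUtlt : ∀ z : ℕ, z ≤ S → Ut z = U z - c * z := by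
    intro z hz
    rw [hUt z]
    have : min z S = z := min_eq_left hz
    rw [this]
  have hUtge : ∀ z : ℕ, S ≤ z → Ut z = U z - c * S := by
    intro z hz
    rw [hUt z]
    have : min z S = S := min_eq_right hz
    rw [this]
  constructor
  · -- concavity of Ut
    intro z hz
    obtain ⟨n, rfl⟩ : ∃ n, z = n + 1 := ⟨z - 1, by omega⟩
    have hsub : n + 1 - 1 = n := by omega
    rw [hsub]
    rcases lt_trichotomy (n + 1) S with h | h | h
    · -- n + 2 ≤ S
      rw [hUtlt n (by omega), hUtlt (n + 1) (by omega), hUtlt (n + 2) (by omega)]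
      have := hUconc n
      push_cast
      linarith
    · -- n + 1 = S
      rw [hUtlt n (by omega), hUtlt (n + 1) (by omega), hUtge (n + 2) (by omega)]
      have h1 := hUstep n (by omega)
      have h2 : U (n + 2) ≤ U (n + 1) := by
        have := hUS (n + 2); rw [← h] at this; exact this
      rw [← h]
      push_cast
      linarith
    · -- S < n + 1, so S ≤ n
      have hSn : S ≤ n := by omega
      rw [hUtge n hSn, hUtge (n + 1) (by omega), hUtge (n + 2) (by omega)]
      have h1 : U (n + 1) ≤ U n := le_trans (hUS (n + 1)) (hUmono S n hSn)
      have h2 : U n ≤ U (n + 1) := hUmono n (n + 1) (by omega)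
      have h3 : U (n + 2) ≤ U (n + 1) := le_trans (hUS (n + 2)) (hUmono S (n + 1) (by omega))
      linarith
  · -- monotonicity of Ut
    have hstep : ∀ z : ℕ, Ut z ≤ Ut (z + 1) := by
      intro z
      rcases lt_or_ge z S with h | h
      · rw [hUtlt z (by omega), hUtlt (z + 1) (by omega)]
        have := hUstep z h
        push_cast
        linarith
      · rw [hUtge z h, hUtge (z + 1) (by omega)]
        have : U z ≤ U (z + 1) := hUmono z (z + 1) (by omega)
        linarith
    exact fun z z' hzz => monotone_nat_of_le_succ hstep hzz
end

section
/- Let U(z) be as in the dispensing problem with utilities satisfying u_i(y) - u_i(y-1) > c for y ≤ A_i. If z ≤ Σ_i A_i then U(z) - U(z-1) > c, and if z > Σ_i A_i then U(z) - U(z-1) = 0. -/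
/-!
Take an optimal allocation `y` for `z - 1` units. If `z ≤ ∑ A`, then `∑ y < ∑ A`, so some item
has `y i < A i`; handing it one more unit is feasible for `z` and gains more than `c`. If
`z > ∑ A`, the budget constraint is slack at both `z` and `z - 1`, so the two optimisation
problems coincide.
-/

open Finset

theorem Finset.sum_update_add_self {ι M : Type*} [Fintype ι] [DecidableEq ι] [AddCommMonoid M]
    (f : ι → M) (i : ι) (b : M) :
    ∑ j, Function.update f i b j + f i = ∑ j, f j + b := by
  rw [sum_update_of_mem (mem_univ i), sum_eq_add_sum_sdiff_singleton_of_mem (mem_univ i) f]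
  ac_rfl

section Allocation

variable {ι : Type*} [Fintype ι] (A : ι → ℕ) (u : ι → ℕ → ℝ)

def allocationValues (z : ℕ) : Set ℝ :=
  {t : ℝ | ∃ y : ι → ℕ, (∀ i, y i ≤ A i) ∧ (∑ i, y i) ≤ z ∧ t = ∑ i, u i (y i)}

variable {A u}

theorem allocationValues_mono {z z' : ℕ} (h : z ≤ z') :
    allocationValues A u z ⊆ allocationValues A u z' := by
  rintro t ⟨y, hyA, hyz, rfl⟩
  exact ⟨y, hyA, hyz.trans h, rfl⟩

theorem allocationValues_eq_of_sum_le {z z' : ℕ} (hz : ∑ i, A i ≤ z) (hz' : ∑ i, A i ≤ z') :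
    allocationValues A u z = allocationValues A u z' := by
  have hfree : ∀ y : ι → ℕ, (∀ i, y i ≤ A i) → ∑ i, y i ≤ ∑ i, A i :=
    fun y hyA => sum_le_sum fun i _ => hyA i
  ext t
  constructor
  · rintro ⟨y, hyA, -, rfl⟩
    exact ⟨y, hyA, (hfree y hyA).trans hz', rfl⟩
  · rintro ⟨y, hyA, -, rfl⟩
    exact ⟨y, hyA, (hfree y hyA).trans hz, rfl⟩

theorem exists_mem_allocationValues_gt [DecidableEq ι] {c : ℝ}
    (hinc : ∀ i y, y < A i → c < u i (y + 1) - u i y)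
    {y : ι → ℕ} (hyA : ∀ i, y i ≤ A i) (hlt : ∑ i, y i < ∑ i, A i) :
    ∃ t ∈ allocationValues A u (∑ i, y i + 1), ∑ i, u i (y i) + c < t := by
  obtain ⟨i, -, hi⟩ := exists_lt_of_sum_lt hlt
  set y' := Function.update y i (y i + 1)
  have hcount : ∑ j, y' j + y i = ∑ j, y j + (y i + 1) := sum_update_add_self y i _
  have hvalue : ∑ j, u j (y' j) + u i (y i) = ∑ j, u j (y j) + u i (y i + 1) := by
    have hu : (fun j => u j (y' j)) = Function.update (fun j => u j (y j)) i (u i (y i + 1)) :=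
      funext fun j => Function.apply_update (fun j => u j) y i (y i + 1) j
    rw [hu]
    exact sum_update_add_self _ i _
  refine ⟨∑ j, u j (y' j), ⟨y', fun j => ?_, by omega, rfl⟩, ?_⟩
  · rcases eq_or_ne j i with rfl | hji
    · simpa [y'] using hi
    · simpa [y', Function.update_of_ne hji] using hyA j
  · linarith [hinc i (y i) hi]

end Allocation

theorem stmt_9_general (m : ℕ) (A : Fin m → ℕ) (u : Fin m → ℕ → ℝ) (c : ℝ)
    (hinc : ∀ i : Fin m, ∀ y : ℕ, 1 ≤ y → y ≤ A i → u i y - u i (y - 1) > c)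
    (U : ℕ → ℝ)
    (hU : ∀ z : ℕ, IsGreatest
      {t : ℝ | ∃ y : Fin m → ℕ, (∀ i, y i ≤ A i) ∧ (∑ i, y i) ≤ z ∧ t = ∑ i, u i (y i)}
      (U z)) :
    ∀ z : ℕ, 1 ≤ z →
      (z ≤ (∑ i, A i) → U z - U (z - 1) > c) ∧
      (z > (∑ i, A i) → U z - U (z - 1) = 0) := by
  have hU : ∀ z, IsGreatest (allocationValues A u z) (U z) := hU
  intro z hz
  constructor
  · intro hzA
    obtain ⟨⟨y, hyA, hyz, hUy⟩, -⟩ := hU (z - 1)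
    have hinc' : ∀ i y, y < A i → c < u i (y + 1) - u i y := fun i y hy => by
      simpa using hinc i (y + 1) (by omega) hy
    obtain ⟨t, ht, hgt⟩ := exists_mem_allocationValues_gt hinc' hyA (by omega)
    have htz : t ≤ U z := (hU z).2 (allocationValues_mono (by omega) ht)
    linarith
  · intro hzA
    have hsame : allocationValues A u z = allocationValues A u (z - 1) :=
      allocationValues_eq_of_sum_le (by omega) (by omega)
    rw [(hU z).unique (hsame ▸ hU (z - 1)), sub_self]

theorem stmt_9 (m : ℕ) (A : Fin m → ℕ) (u : Fin m → ℕ → ℝ) (c : ℝ) (hc : 0 < c)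
    (hconc : ∀ i : Fin m, ∀ y : ℕ, 1 ≤ y → y + 1 ≤ A i →
      u i y - u i (y - 1) ≥ u i (y + 1) - u i y)
    (hinc : ∀ i : Fin m, ∀ y : ℕ, 1 ≤ y → y ≤ A i → u i y - u i (y - 1) > c)
    (U : ℕ → ℝ)
    (hU : ∀ z : ℕ, IsGreatest
      {t : ℝ | ∃ y : Fin m → ℕ, (∀ i, y i ≤ A i) ∧ (∑ i, y i) ≤ z ∧ t = ∑ i, u i (y i)}
      (U z)) :
    ∀ z : ℕ, 1 ≤ z →
      (z ≤ (∑ i, A i) → U z - U (z - 1) > c) ∧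
      (z > (∑ i, A i) → U z - U (z - 1) = 0) :=
  stmt_9_general m A u c hinc U hU
end

section
/- Let v : {0,..,R} × W → ℝ be given slopes (W a finite set) and fix (z₀, w₀). Define the projection Π by: Π(v)[z, w] = v(z₀, w₀) if w = w₀ and either (z < z₀ and v(z, w) < v(z₀, w₀)) or (z > z₀ and v(z, w) > v(z₀, w₀)); otherwise Π(v)[z, w] = v(z, w). If for each w ≠ w₀ the map z ↦ v(z, w) is nonincreasing, then for every w, the map z ↦ Π(v)[z, w] is nonincreasing whenever z ↦ v(z, w₀) is nonincreasing on each of {0,..,z₀-1} and {z₀+1,..,R} separately with the possible violations only adjacent to z₀; in particular, if v(·, w) is nonincreasing for all w except possibly at the single point z₀ in coordinate w₀, then Π(v)[·, w] is nonincreasing for all w. -/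
open Classical in
theorem stmt_11 {W : Type*} (R : ℕ) (v : ℕ → W → ℝ) (z₀ : ℕ) (w₀ : W)
    (hz₀ : z₀ ≤ R)
    (hoff : ∀ w : W, w ≠ w₀ → ∀ z z' : ℕ, z ≤ z' → z' ≤ R → v z' w ≤ v z w)
    (hw₀ : ∀ z z' : ℕ, z ≤ z' → z' ≤ R → z ≠ z₀ → z' ≠ z₀ → v z' w₀ ≤ v z w₀) :
    ∀ w : W, ∀ z z' : ℕ, z ≤ z' → z' ≤ R →
      (if w = w₀ ∧ ((z' < z₀ ∧ v z' w < v z₀ w₀) ∨ (z' > z₀ ∧ v z' w > v z₀ w₀))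
        then v z₀ w₀ else v z' w) ≤
      (if w = w₀ ∧ ((z < z₀ ∧ v z w < v z₀ w₀) ∨ (z > z₀ ∧ v z w > v z₀ w₀))
        then v z₀ w₀ else v z w) := by
  intro w z z' hzz hR
  have hzR : z ≤ R := hzz.trans hR
  by_cases hw : w = w₀
  · subst hw
    split_ifs with h1 h2 h2
    · exact le_refl _
    · -- goal: v z₀ w₀ ≤ v z w₀, h1 holds for z', h2 fails for z
      push_neg at h2
      rcases h2 rfl with h2
      rcases h1.2 with ⟨hlt, hv⟩ | ⟨hgt, hv⟩
      · -- z' < z₀, so z < z₀, z ≠ z₀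
        have hzlt : z < z₀ := lt_of_le_of_lt hzz hlt
        rcases h2 with ⟨ha, hb⟩
        have := ha hzlt
        linarith
      · -- z' > z₀, v z' > a
        by_cases hz : z = z₀
        · rw [hz]
        · have := hw₀ z z' hzz hR hz (Nat.ne_of_gt hgt)
          linarith
    · -- goal: v z' w₀ ≤ v z₀ w₀, h2 holds for z, h1 fails for z'
      push_neg at h1
      rcases h1 rfl with h1
      rcases h2.2 with ⟨hlt, hv⟩ | ⟨hgt, hv⟩
      · by_cases hz' : z' = z₀
        · rw [hz']
        · have := hw₀ z z' hzz hR (Nat.ne_of_lt hlt) hz'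
          linarith
      · have hgt' : z' > z₀ := lt_of_lt_of_le hgt hzz
        rcases h1 with ⟨ha, hb⟩
        have := hb hgt'
        linarith
    · -- both false
      push_neg at h1 h2
      rcases h1 rfl with ⟨h1a, h1b⟩
      rcases h2 rfl with ⟨h2a, h2b⟩
      by_cases hz : z = z₀
      · subst hz
        by_cases hz' : z' = z
        · rw [hz']
        · have hgt : z' > z := lt_of_le_of_ne hzz (Ne.symm hz')
          have := h1b hgt
          linarith
      · by_cases hz' : z' = z₀
        · subst hz'
          have hlt : z < z' := lt_of_le_of_ne hzz hz
          have := h2a hlt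
          linarith
        · exact hw₀ z z' hzz hR hz hz'
  · have : ¬ (w = w₀ ∧ ((z' < z₀ ∧ v z' w < v z₀ w₀) ∨ (z' > z₀ ∧ v z' w > v z₀ w₀))) :=
      fun h => hw h.1
    rw [if_neg this, if_neg (fun h => hw h.1)]
    exact hoff w hw z z' hzz hR
end

section
/- Let v̄ : {0,..,R} → ℝ be obtained from a function ṽ : {0,..,R} → ℝ by the projection v̄(z) = ṽ(z₀) if (z < z₀ and ṽ(z) < ṽ(z₀)) or (z > z₀ and ṽ(z) > ṽ(z₀)), and v̄(z) = ṽ(z) otherwise, where ṽ is nonincreasing on {0,..,R} \ {z₀}. Then v̄ is nonincreasing on {0,..,R}. -/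
open Classical in
theorem stmt_12 (R : ℕ) (vt vb : ℕ → ℝ) (z₀ : ℕ) (hz₀ : z₀ ≤ R)
    (hproj : ∀ z : ℕ, vb z =
      if (z < z₀ ∧ vt z < vt z₀) ∨ (z > z₀ ∧ vt z > vt z₀) then vt z₀ else vt z)
    (hmono : ∀ z z' : ℕ, z ≤ z' → z' ≤ R → z ≠ z₀ → z' ≠ z₀ → vt z' ≤ vt z) :
    ∀ z z' : ℕ, z ≤ z' → z' ≤ R → vb z' ≤ vb z := by
  intro z z' hle hR
  rw [hproj z, hproj z']
  split_ifs with h1 h2 h2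
  · exact le_refl _
  · push_neg at h2
    rcases h1 with ⟨hlt, hv⟩ | ⟨hgt, hv⟩
    · exact h2.1 (lt_of_le_of_lt hle hlt)
    · rcases lt_trichotomy z z₀ with h | h | h
      · exact h2.1 h
      · simp [h]
      · have := hmono z z' hle hR (Nat.ne_of_gt h) (Nat.ne_of_gt hgt)
        linarith
  · push_neg at h1
    rcases h2 with ⟨hlt, hv⟩ | ⟨hgt, hv⟩
    · rcases lt_trichotomy z' z₀ with h | h | h
      · have h3 := hmono z z' hle hR (Nat.ne_of_lt hlt) (Nat.ne_of_lt h)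
        have h4 := h1.1 h
        linarith
      · simp [h]
      · exact h1.2 h
    · exact h1.2 (lt_of_lt_of_le hgt hle)
  · push_neg at h1 h2
    rcases eq_or_ne z z₀ with heq | hz
    · rcases eq_or_ne z' z₀ with heq' | hz'
      · rw [heq, heq']
      · rw [heq]; exact h1.2 (lt_of_le_of_ne (heq ▸ hle) (Ne.symm hz'))
    · rcases eq_or_ne z' z₀ with heq' | hz'
      · rw [heq']; exact h2.1 (lt_of_le_of_ne (heq' ▸ hle) hz)
      · exact hmono z z' hle hR hz hz'
end
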